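/- arXiv:1905.01654 — 6 statements merged into one kernel-verified Lean document; each statement's English description precedes it below -/
import Mathlib

section
/- Let α > 0, β > 0, and let r* > 1/√β. Set γ = α·r*/(1 + β·(r*)²) and r⋆ = (α − √(α² − 4·β·γ²))/(2·β·γ). Then 0 < r⋆ ≤ 1/√β, r⋆ < r*, and α·r⋆/(1 + β·(r⋆)²) = α·r*/(1 + β·(r*)²); that is, any input amplitude above the saturation point can be replaced by a strictly smaller input amplitude at or below the saturation point producing exactly the same output amplitude. -/
/-- Any input amplitude `r* > 1/√β` can be replaced by a strictly
smaller input amplitude `r⋆ = (α − √(α² − 4βγ²))/(2βγ)` (with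
`γ = α·r*/(1 + β·(r*)²)`) lying in `(0, 1/√β]` producing the same output
amplitude. -/
theorem saleh_replace_above_saturation (α β rstar : ℝ) (hα : 0 < α) (hβ : 0 < β)
    (hrstar : 1 / Real.sqrt β < rstar)
    (γ : ℝ) (hγ : γ = α * rstar / (1 + β * rstar ^ 2))
    (rdag : ℝ) (hrdag : rdag = (α - Real.sqrt (α ^ 2 - 4 * β * γ ^ 2)) / (2 * β * γ)) :
    0 < rdag ∧ rdag ≤ 1 / Real.sqrt β ∧ rdag < rstar ∧
      α * rdag / (1 + β * rdag ^ 2) = α * rstar / (1 + β * rstar ^ 2) := by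
  have hsb : 0 < Real.sqrt β := Real.sqrt_pos.mpr hβ
  have hr0 : 0 < rstar := lt_trans (by positivity) hrstar
  have h1 : 1 < Real.sqrt β * rstar := by
    rw [div_lt_iff₀ hsb] at hrstar; linarith [hrstar]
  have hsq : Real.sqrt β * Real.sqrt β = β := Real.mul_self_sqrt hβ.le
  have hb1 : 1 < β * rstar ^ 2 := by nlinarith
  have hden : 0 < 1 + β * rstar ^ 2 := by positivity
  have hsqrt : Real.sqrt (α ^ 2 - 4 * β * γ ^ 2)
      = α * (β * rstar ^ 2 - 1) / (1 + β * rstar ^ 2) := by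
    rw [hγ, show α ^ 2 - 4 * β * (α * rstar / (1 + β * rstar ^ 2)) ^ 2
        = (α * (β * rstar ^ 2 - 1) / (1 + β * rstar ^ 2)) ^ 2 by
      field_simp; ring]
    exact Real.sqrt_sq (div_nonneg (by nlinarith) hden.le)
  have hγpos : 0 < γ := by rw [hγ]; positivity
  have hrd : rdag = 1 / (β * rstar) := by
    rw [hrdag, hsqrt, hγ]
    field_simp
    ring
  refine ⟨by rw [hrd]; positivity, ?_, ?_, ?_⟩
  · rw [hrd, div_le_div_iff₀ (by positivity) hsb]
    nlinarith
  · rw [hrd, div_lt_iff₀ (by positivity)]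
    nlinarith
  · rw [hrd]
    field_simp
    ring
end

section
/- For α > 0 and β > 0, the function z ↦ ν_{α,β}(z)², where ν_{α,β}(z) = (α − √(α² − 4·β·z²))/(2·β·z) for z > 0 and ν_{α,β}(0) = 0, is convex on the interval [0, α/(2√β)]. -/
/-- The inverse `ν_{α,β}` of the Saleh amplitude function on `[0, 1/√β]`:
`ν(z) = (α − √(α² − 4βz²))/(2βz)` for `z ≠ 0` and `ν(0) = 0`. -/
noncomputable def salehInv (α β z : ℝ) : ℝ :=
  if z = 0 then 0 else (α - Real.sqrt (α ^ 2 - 4 * β * z ^ 2)) / (2 * β * z)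

noncomputable def salehH (α β z : ℝ) : ℝ :=
  2 * z / (α + Real.sqrt (α ^ 2 - 4 * β * z ^ 2))

noncomputable def salehH' (α β z : ℝ) : ℝ :=
  (2 * (α + Real.sqrt (α ^ 2 - 4 * β * z ^ 2))
      + 8 * β * z ^ 2 / Real.sqrt (α ^ 2 - 4 * β * z ^ 2))
    / (α + Real.sqrt (α ^ 2 - 4 * β * z ^ 2)) ^ 2

lemma saleh_disc_pos (α β : ℝ) (hα : 0 < α) (hβ : 0 < β) {z : ℝ}
    (hz : z ∈ Set.Ioo 0 (α / (2 * Real.sqrt β))) :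
    0 < α ^ 2 - 4 * β * z ^ 2 := by
  obtain ⟨hz0, hzc⟩ := hz
  have hsb : 0 < Real.sqrt β := Real.sqrt_pos.mpr hβ
  have hsb2 : Real.sqrt β ^ 2 = β := Real.sq_sqrt hβ.le
  have hlt : z * (2 * Real.sqrt β) < α := (lt_div_iff₀ (by positivity)).mp hzc
  nlinarith [hsb2, mul_pos hz0 hsb]

lemma saleh_disc_nonneg (α β : ℝ) (hα : 0 < α) (hβ : 0 < β) {z : ℝ}
    (hz : z ∈ Set.Icc 0 (α / (2 * Real.sqrt β))) :
    0 ≤ α ^ 2 - 4 * β * z ^ 2 := by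
  obtain ⟨hz0, hzc⟩ := hz
  have hsb : 0 < Real.sqrt β := Real.sqrt_pos.mpr hβ
  have hsb2 : Real.sqrt β ^ 2 = β := Real.sq_sqrt hβ.le
  have hle : z * (2 * Real.sqrt β) ≤ α := (le_div_iff₀ (by positivity)).mp hzc
  nlinarith [hsb2, mul_nonneg hz0 hsb.le]

lemma salehH_hasDerivAt (α β : ℝ) (hα : 0 < α) (hβ : 0 < β) {z : ℝ}
    (hz : z ∈ Set.Ioo 0 (α / (2 * Real.sqrt β))) :
    HasDerivAt (salehH α β) (salehH' α β z) z := by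
  have hd : 0 < α ^ 2 - 4 * β * z ^ 2 := saleh_disc_pos α β hα hβ hz
  set s := Real.sqrt (α ^ 2 - 4 * β * z ^ 2) with hs
  have hspos : 0 < s := Real.sqrt_pos.mpr hd
  have hden : 0 < α + s := by linarith
  have h1 : HasDerivAt (fun w : ℝ => α ^ 2 - 4 * β * w ^ 2) (-(4 * β * (2 * z ^ 1))) z := by
    simpa using ((hasDerivAt_pow 2 z).const_mul (4 * β)).const_sub (α ^ 2)
  have h2 : HasDerivAt (fun w : ℝ => Real.sqrt (α ^ 2 - 4 * β * w ^ 2))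
      (1 / (2 * s) * (-(4 * β * (2 * z ^ 1)))) z :=
    (Real.hasDerivAt_sqrt hd.ne').comp z h1
  have h3 : HasDerivAt (fun w : ℝ => α + Real.sqrt (α ^ 2 - 4 * β * w ^ 2))
      (1 / (2 * s) * (-(4 * β * (2 * z ^ 1)))) z := h2.const_add α
  have h4 : HasDerivAt (fun w : ℝ => 2 * w) 2 z := by
    simpa using (hasDerivAt_id z).const_mul 2
  have h5 := h4.div h3 hden.ne'
  have heq : (2 * (α + s) - 2 * z * (1 / (2 * s) * (-(4 * β * (2 * z ^ 1)))))
      / (α + s) ^ 2 = salehH' α β z := by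
    rw [salehH', ← hs]
    field_simp
    ring
  rw [heq] at h5
  exact h5

lemma salehH'_monotoneOn (α β : ℝ) (hα : 0 < α) (hβ : 0 < β) :
    MonotoneOn (salehH' α β) (Set.Ioo 0 (α / (2 * Real.sqrt β))) := by
  intro x hx y hy hxy
  have hdx : 0 < α ^ 2 - 4 * β * x ^ 2 := saleh_disc_pos α β hα hβ hx
  have hdy : 0 < α ^ 2 - 4 * β * y ^ 2 := saleh_disc_pos α β hα hβ hy
  set sx := Real.sqrt (α ^ 2 - 4 * β * x ^ 2) with hsx
  set sy := Real.sqrt (α ^ 2 - 4 * β * y ^ 2) with hsy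
  have hsxp : 0 < sx := Real.sqrt_pos.mpr hdx
  have hsyp : 0 < sy := Real.sqrt_pos.mpr hdy
  have hx0 : 0 < x := hx.1
  have hy0 : 0 < y := hy.1
  have hsyx : sy ≤ sx := by
    apply Real.sqrt_le_sqrt
    nlinarith [mul_self_le_mul_self hx0.le hxy]
  have hrx : salehH' α β x = 2 / (α + sx) + 8 * β * x ^ 2 / (sx * (α + sx) ^ 2) := by
    rw [salehH', ← hsx]
    have h1 : (0:ℝ) < α + sx := by linarith
    field_simp
  have hry : salehH' α β y = 2 / (α + sy) + 8 * β * y ^ 2 / (sy * (α + sy) ^ 2) := by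
    rw [salehH', ← hsy]
    have h1 : (0:ℝ) < α + sy := by linarith
    field_simp
  rw [hrx, hry]
  have hA : 2 / (α + sx) ≤ 2 / (α + sy) := by
    apply div_le_div_of_nonneg_left (by norm_num) (by linarith) (by linarith)
  have hB : 8 * β * x ^ 2 / (sx * (α + sx) ^ 2) ≤ 8 * β * y ^ 2 / (sy * (α + sy) ^ 2) := by
    apply div_le_div₀ (by positivity) (by nlinarith [mul_self_le_mul_self hx0.le hxy]) (by positivity)
    have h1 : (α + sy) ^ 2 ≤ (α + sx) ^ 2 := by nlinarith
    nlinarith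
  linarith

lemma salehH_convexOn (α β : ℝ) (hα : 0 < α) (hβ : 0 < β) :
    ConvexOn ℝ (Set.Icc 0 (α / (2 * Real.sqrt β))) (salehH α β) := by
  apply MonotoneOn.convexOn_of_deriv (convex_Icc _ _)
  · -- continuity
    apply ContinuousOn.div
    · exact (continuous_const.mul continuous_id).continuousOn
    · exact (continuous_const.add (Real.continuous_sqrt.comp
        (by continuity))).continuousOn
    · intro z hz
      have h1 : 0 ≤ Real.sqrt (α ^ 2 - 4 * β * z ^ 2) := Real.sqrt_nonneg _
      positivity
  · rw [interior_Icc]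
    intro z hz
    exact (salehH_hasDerivAt α β hα hβ hz).differentiableAt.differentiableWithinAt
  · rw [interior_Icc]
    intro x hx y hy hxy
    rw [(salehH_hasDerivAt α β hα hβ hx).deriv, (salehH_hasDerivAt α β hα hβ hy).deriv]
    exact salehH'_monotoneOn α β hα hβ hx hy hxy

lemma sq_convexOn {D : Set ℝ} {f : ℝ → ℝ} (hf : ConvexOn ℝ D f)
    (h0 : ∀ x ∈ D, 0 ≤ f x) : ConvexOn ℝ D (fun x => f x ^ 2) := by
  refine ⟨hf.1, fun x hx y hy a b ha hb hab => ?_⟩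
  have h1 : f (a • x + b • y) ≤ a * f x + b * f y := hf.2 hx hy ha hb hab
  have h2 : 0 ≤ f (a • x + b • y) := h0 _ (hf.1 hx hy ha hb hab)
  have h3 : 0 ≤ f x := h0 x hx
  have h4 : 0 ≤ f y := h0 y hy
  simp only [smul_eq_mul] at h1 h2 ⊢
  have h5 : f (a * x + b * y) ^ 2 ≤ (a * f x + b * f y) ^ 2 := by nlinarith
  nlinarith [h5, mul_nonneg (mul_nonneg ha hb) (sq_nonneg (f x - f y))]

/-- `z ↦ ν_{α,β}(z)²` is convex on `[0, α/(2√β)]`. -/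
theorem salehInv_sq_convexOn (α β : ℝ) (hα : 0 < α) (hβ : 0 < β) :
    ConvexOn ℝ (Set.Icc 0 (α / (2 * Real.sqrt β)))
      (fun z => (salehInv α β z) ^ 2) := by
  have hH : ConvexOn ℝ (Set.Icc 0 (α / (2 * Real.sqrt β)))
      (fun z => (salehH α β z) ^ 2) := by
    apply sq_convexOn (salehH_convexOn α β hα hβ)
    intro z hz
    have h1 : 0 ≤ Real.sqrt (α ^ 2 - 4 * β * z ^ 2) := Real.sqrt_nonneg _
    have hz0 : 0 ≤ z := hz.1
    rw [salehH]
    positivity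
  apply hH.congr
  intro z hz
  have heq : salehH α β z = salehInv α β z := by
    rcases eq_or_ne z 0 with rfl | hz0
    · simp [salehH, salehInv]
    · have hz0' : 0 < z := lt_of_le_of_ne hz.1 (Ne.symm hz0)
      have hd : 0 ≤ α ^ 2 - 4 * β * z ^ 2 := saleh_disc_nonneg α β hα hβ hz
      set s := Real.sqrt (α ^ 2 - 4 * β * z ^ 2) with hs
      have hs2 : s ^ 2 = α ^ 2 - 4 * β * z ^ 2 := Real.sq_sqrt hd
      have hsnn : 0 ≤ s := Real.sqrt_nonneg _
      rw [salehH, salehInv, if_neg hz0, ← hs]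
      rw [div_eq_div_iff (by positivity) (by positivity)]
      nlinarith
  simp [heq]
end

section
/- Fix M ∈ ℕ, parameters α_i > 0 and β_i > 0 for i = 1,…,M, a vector l_t ∈ ℝ^M with nonnegative entries, and constants ε ≥ 0, P ≥ 0. Then the feasible set C = { z̄ ∈ ℝ^M : Σ_{i=1}^M l_{t,i}·z̄_i ≤ √ε, Σ_{i=1}^M ν_{α_i,β_i}(z̄_i)² ≤ P, and 0 ≤ z̄_i ≤ α_i/(2√β_i) for all i } is a convex subset of ℝ^M; consequently, maximizing the linear objective Σ_{i=1}^M l_{s,i}·z̄_i over C for any l_s ∈ ℝ^M is a convex optimization problem. -/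
/-- The feasible set `C` of the transformed beamforming problem (19). -/
def feasC (M : ℕ) (α β lt : Fin M → ℝ) (ε P : ℝ) : Set (Fin M → ℝ) :=
  {z | (∑ i, lt i * z i) ≤ Real.sqrt ε ∧
       (∑ i, (salehInv (α i) (β i) (z i)) ^ 2) ≤ P ∧
       ∀ i, 0 ≤ z i ∧ z i ≤ α i / (2 * Real.sqrt (β i))}

set_option maxHeartbeats 1000000

lemma sqrt_arg_nonneg {α β z : ℝ} (hα : 0 < α) (hβ : 0 < β)
    (hz0 : 0 ≤ z) (hz1 : z ≤ α / (2 * Real.sqrt β)) :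
    0 ≤ α ^ 2 - 4 * β * z ^ 2 := by
  have hsβ : (0:ℝ) < Real.sqrt β := Real.sqrt_pos.2 hβ
  have h1 : z * (2 * Real.sqrt β) ≤ α := by
    rw [le_div_iff₀ (by positivity)] at hz1; linarith
  have h2 : Real.sqrt β ^ 2 = β := Real.sq_sqrt hβ.le
  nlinarith [mul_nonneg hz0 (by positivity : (0:ℝ) ≤ 2 * Real.sqrt β)]

lemma salehInv_sq_eq {α β z : ℝ} (hα : 0 < α) (hβ : 0 < β)
    (hz0 : 0 ≤ z) (hz1 : z ≤ α / (2 * Real.sqrt β)) :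
    (salehInv α β z) ^ 2 =
      (α - Real.sqrt (α ^ 2 - 4 * β * z ^ 2)) / (β * (α + Real.sqrt (α ^ 2 - 4 * β * z ^ 2))) := by
  have harg := sqrt_arg_nonneg hα hβ hz0 hz1
  have hs2 : Real.sqrt (α ^ 2 - 4 * β * z ^ 2) ^ 2 = α ^ 2 - 4 * β * z ^ 2 := Real.sq_sqrt harg
  have hsnn : 0 ≤ Real.sqrt (α ^ 2 - 4 * β * z ^ 2) := Real.sqrt_nonneg _
  rcases eq_or_lt_of_le hz0 with h0 | hzpos
  · rw [salehInv, if_pos h0.symm, ← h0]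
    rw [show α ^ 2 - 4 * β * (0:ℝ) ^ 2 = α ^ 2 by ring, Real.sqrt_sq hα.le]
    simp
  · have hzne : z ≠ 0 := ne_of_gt hzpos
    rw [salehInv, if_neg hzne]
    set s := Real.sqrt (α ^ 2 - 4 * β * z ^ 2) with hs
    rw [div_pow, div_eq_div_iff (by positivity) (by positivity)]
    linear_combination (-(α - s) * β) * hs2

lemma salehInv_sq_cvx {α β x y a b : ℝ} (hα : 0 < α) (hβ : 0 < β)
    (hx0 : 0 ≤ x) (hx1 : x ≤ α / (2 * Real.sqrt β))
    (hy0 : 0 ≤ y) (hy1 : y ≤ α / (2 * Real.sqrt β))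
    (ha : 0 ≤ a) (hb : 0 ≤ b) (hab : a + b = 1) :
    (salehInv α β (a * x + b * y)) ^ 2 ≤
      a * (salehInv α β x) ^ 2 + b * (salehInv α β y) ^ 2 := by
  have hb1 : b = 1 - a := by linarith
  subst hb1
  have ha1 : a ≤ 1 := by linarith
  have hw0 : 0 ≤ a * x + (1 - a) * y := by
    have := mul_nonneg ha hx0; have := mul_nonneg hb hy0; linarith
  have hw1 : a * x + (1 - a) * y ≤ α / (2 * Real.sqrt β) := by nlinarith
  have hX := sqrt_arg_nonneg hα hβ hx0 hx1
  have hY := sqrt_arg_nonneg hα hβ hy0 hy1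
  have hW := sqrt_arg_nonneg hα hβ hw0 hw1
  have ex := salehInv_sq_eq hα hβ hx0 hx1
  have ey := salehInv_sq_eq hα hβ hy0 hy1
  have ew := salehInv_sq_eq hα hβ hw0 hw1
  set sx := Real.sqrt (α ^ 2 - 4 * β * x ^ 2) with hsx
  set sy := Real.sqrt (α ^ 2 - 4 * β * y ^ 2) with hsy
  set sw := Real.sqrt (α ^ 2 - 4 * β * (a * x + (1 - a) * y) ^ 2) with hsw
  have hx2 : sx ^ 2 = α ^ 2 - 4 * β * x ^ 2 := Real.sq_sqrt hX
  have hy2 : sy ^ 2 = α ^ 2 - 4 * β * y ^ 2 := Real.sq_sqrt hY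
  have hw2 : sw ^ 2 = α ^ 2 - 4 * β * (a * x + (1 - a) * y) ^ 2 := Real.sq_sqrt hW
  have hsxn : 0 ≤ sx := Real.sqrt_nonneg _
  have hsyn : 0 ≤ sy := Real.sqrt_nonneg _
  have hswn : 0 ≤ sw := Real.sqrt_nonneg _
  have hsxα : sx ≤ α := by nlinarith [sq_nonneg x, mul_nonneg hβ.le (sq_nonneg x)]
  have hsyα : sy ≤ α := by nlinarith [mul_nonneg hβ.le (sq_nonneg y)]
  -- step 1: concavity of sqrt(α² - 4βz²)
  have hcn : 0 ≤ a * sx + (1 - a) * sy := by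
    nlinarith [mul_nonneg ha hsxn, mul_nonneg hb hsyn]
  have step1 : a * sx + (1 - a) * sy ≤ sw := by
    have h1 : (a * sx + (1 - a) * sy) ^ 2 ≤ α ^ 2 - 4 * β * (a * x + (1 - a) * y) ^ 2 := by
      nlinarith [mul_nonneg (mul_nonneg ha hb) (sq_nonneg (sx - sy)),
        mul_nonneg (mul_nonneg (mul_nonneg hβ.le ha) hb) (sq_nonneg (x - y))]
    calc a * sx + (1 - a) * sy = Real.sqrt ((a * sx + (1 - a) * sy) ^ 2) :=
          (Real.sqrt_sq hcn).symm
      _ ≤ sw := by rw [hsw]; exact Real.sqrt_le_sqrt h1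
  -- rewrite squares
  rw [ew, ex, ey]
  set t := a * sx + (1 - a) * sy with ht
  have htn : 0 ≤ t := by nlinarith [mul_nonneg ha hsxn, mul_nonneg hb hsyn]
  -- antitone step
  have step2 : (α - sw) / (β * (α + sw)) ≤ (α - t) / (β * (α + t)) := by
    rw [div_le_div_iff₀ (by positivity) (by positivity)]
    nlinarith [mul_pos hβ (by linarith : (0:ℝ) < α)]
  refine step2.trans ?_
  -- convexity of h(t) = (α - t)/(β(α + t))
  have hd1 : (β * (α + sx)) ≠ 0 := by positivity
  have hd2 : (β * (α + sy)) ≠ 0 := by positivity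
  have hd3 : (0:ℝ) < β * (α + (a * sx + (1 - a) * sy)) :=
    mul_pos hβ (by nlinarith [mul_nonneg ha hsxn, mul_nonneg hb hsyn])
  have hd12 : (0:ℝ) < β * (α + sx) * (β * (α + sy)) := by positivity
  rw [ht, mul_div_assoc', mul_div_assoc', div_add_div _ _ hd1 hd2, div_le_div_iff₀ hd3 hd12]
  rw [← sub_nonneg]
  have hkey := mul_nonneg (mul_nonneg ha hb) (sq_nonneg (sx - sy))
  calc (0:ℝ) ≤ 2 * α * β ^ 2 * (a * (1 - a) * (sx - sy) ^ 2) :=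
        mul_nonneg (by positivity) hkey
    _ = _ := by ring

lemma sum_lin_comb {M : ℕ} (c : Fin M → ℝ) (x y : Fin M → ℝ) (a b : ℝ) :
    (∑ i, c i * (a • x + b • y) i) = a * (∑ i, c i * x i) + b * (∑ i, c i * y i) := by
  rw [Finset.mul_sum, Finset.mul_sum, ← Finset.sum_add_distrib]
  refine Finset.sum_congr rfl fun i _ => ?_
  simp [Pi.add_apply, Pi.smul_apply, smul_eq_mul]; ring

/-- the feasible set `C` is convex, and hence maximizing any linear
objective `z ↦ Σ l_s,i·z_i` over `C` is a convex optimization problem (the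
objective is concave on `C`). -/
theorem feasC_convex (M : ℕ) (α β lt : Fin M → ℝ)
    (hα : ∀ i, 0 < α i) (hβ : ∀ i, 0 < β i) (hlt : ∀ i, 0 ≤ lt i)
    (ε P : ℝ) (hε : 0 ≤ ε) (hP : 0 ≤ P) :
    Convex ℝ (feasC M α β lt ε P) ∧
    ∀ ls : Fin M → ℝ,
      ConcaveOn ℝ (feasC M α β lt ε P) (fun z => ∑ i, ls i * z i) := by
  have hconv : Convex ℝ (feasC M α β lt ε P) := by
    rintro x ⟨hx1, hx2, hx3⟩ y ⟨hy1, hy2, hy3⟩ a b ha hb hab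
    refine ⟨?_, ?_, ?_⟩
    · rw [sum_lin_comb]
      have h1 : a * Real.sqrt ε + b * Real.sqrt ε = Real.sqrt ε := by
        rw [← add_mul, hab, one_mul]
      linarith [mul_le_mul_of_nonneg_left hx1 ha, mul_le_mul_of_nonneg_left hy1 hb]
    · have hpt : ∀ i, (salehInv (α i) (β i) ((a • x + b • y) i)) ^ 2 ≤
          a * (salehInv (α i) (β i) (x i)) ^ 2 + b * (salehInv (α i) (β i) (y i)) ^ 2 := by
        intro i
        have := salehInv_sq_cvx (hα i) (hβ i) (hx3 i).1 (hx3 i).2 (hy3 i).1 (hy3 i).2 ha hb hab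
        simpa [Pi.add_apply, Pi.smul_apply, smul_eq_mul] using this
      calc (∑ i, (salehInv (α i) (β i) ((a • x + b • y) i)) ^ 2)
          ≤ ∑ i, (a * (salehInv (α i) (β i) (x i)) ^ 2 +
              b * (salehInv (α i) (β i) (y i)) ^ 2) :=
            Finset.sum_le_sum fun i _ => hpt i
        _ = a * (∑ i, (salehInv (α i) (β i) (x i)) ^ 2) +
              b * (∑ i, (salehInv (α i) (β i) (y i)) ^ 2) := by
            rw [Finset.sum_add_distrib, ← Finset.mul_sum, ← Finset.mul_sum]
        _ ≤ P := by
            have h2 : a * P + b * P = P := by rw [← add_mul, hab, one_mul]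
            linarith [mul_le_mul_of_nonneg_left hx2 ha, mul_le_mul_of_nonneg_left hy2 hb]
    · intro i
      have hxi := hx3 i; have hyi := hy3 i
      constructor
      · simp only [Pi.add_apply, Pi.smul_apply, smul_eq_mul]
        nlinarith [mul_nonneg ha hxi.1, mul_nonneg hb hyi.1]
      · simp only [Pi.add_apply, Pi.smul_apply, smul_eq_mul]
        have h3 : a * (α i / (2 * Real.sqrt (β i))) + b * (α i / (2 * Real.sqrt (β i)))
            = α i / (2 * Real.sqrt (β i)) := by rw [← add_mul, hab, one_mul]
        linarith [mul_le_mul_of_nonneg_left hxi.2 ha, mul_le_mul_of_nonneg_left hyi.2 hb]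
  refine ⟨hconv, fun ls => ⟨hconv, ?_⟩⟩
  intro x _ y _ a b ha hb hab
  simp only [smul_eq_mul]
  exact le_of_eq ((sum_lin_comb ls x y a b).symm)
end

section
/- Fix M ∈ ℕ, parameters α_i > 0 and β_i > 0 for i = 1,…,M, vectors l_s, l_t ∈ ℝ^M with nonnegative entries, and constants ε ≥ 0, P ≥ 0. Define the sets C = { z̄ ∈ ℝ^M : Σ_i l_{t,i}·z̄_i ≤ √ε, Σ_i ν_{α_i,β_i}(z̄_i)² ≤ P, 0 ≤ z̄_i ≤ α_i/(2√β_i) } and D = { r ∈ ℝ^M : (Σ_i l_{t,i}·g_{α_i,β_i}(r_i))² ≤ ε, Σ_i r_i² ≤ P, 0 ≤ r_i ≤ 1/√β_i }. If z̄* ∈ C maximizes Σ_i l_{s,i}·z̄_i over C, then the vector r* defined by r*_i = ν_{α_i,β_i}(z̄*_i) lies in D and maximizes Σ_i l_{s,i}·g_{α_i,β_i}(r_i) over D. -/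
/-- The Saleh amplitude function `g_{α,β}(r) = α·r/(1 + β·r²)`. -/
noncomputable def salehAmp (α β r : ℝ) : ℝ := α * r / (1 + β * r ^ 2)

/-- The feasible set `D` of the original amplitude problem (17). -/
noncomputable def feasD (M : ℕ) (α β lt : Fin M → ℝ) (ε P : ℝ) : Set (Fin M → ℝ) :=
  {r | (∑ i, lt i * salehAmp (α i) (β i) (r i)) ^ 2 ≤ ε ∧
       (∑ i, (r i) ^ 2) ≤ P ∧
       ∀ i, 0 ≤ r i ∧ r i ≤ 1 / Real.sqrt (β i)}

/-- if `z̄*` maximizes the linear objective over `C`, then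
`r* = ν(z̄*)` lies in `D` and maximizes `Σ l_s,i·g_i(r_i)` over `D`. -/
lemma salehAmp_nonneg {α β r : ℝ} (hα : 0 < α) (hβ : 0 < β) (hr : 0 ≤ r) :
    0 ≤ salehAmp α β r := by
  unfold salehAmp; positivity

lemma salehAmp_le {α β r : ℝ} (hα : 0 < α) (hβ : 0 < β) (hr : 0 ≤ r) :
    salehAmp α β r ≤ α / (2 * Real.sqrt β) := by
  have ht : 0 < Real.sqrt β := Real.sqrt_pos.2 hβ
  have ht2 : Real.sqrt β ^ 2 = β := Real.sq_sqrt hβ.le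
  unfold salehAmp
  rw [div_le_div_iff₀ (by positivity) (by positivity)]
  have key : α * r * (2 * Real.sqrt β) ≤ α * (1 + Real.sqrt β ^ 2 * r ^ 2) := by
    nlinarith [mul_nonneg hα.le (sq_nonneg (Real.sqrt β * r - 1))]
  rw [ht2] at key
  linarith

lemma salehInv_amp {α β r : ℝ} (hα : 0 < α) (hβ : 0 < β) (hr0 : 0 ≤ r)
    (hr1 : r ≤ 1 / Real.sqrt β) : salehInv α β (salehAmp α β r) = r := by
  have ht : 0 < Real.sqrt β := Real.sqrt_pos.2 hβ
  have ht2 : Real.sqrt β ^ 2 = β := Real.sq_sqrt hβ.le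
  have hr1' : r * Real.sqrt β ≤ 1 := by
    rw [le_div_iff₀ ht] at hr1; linarith
  have hbr : β * r ^ 2 ≤ 1 := by
    have hbeq : β * r ^ 2 = (r * Real.sqrt β) ^ 2 := by rw [mul_pow, ht2]; ring
    rw [hbeq]
    nlinarith [mul_nonneg hr0 ht.le]
  rcases eq_or_lt_of_le hr0 with h | h
  · simp [salehAmp, salehInv, ← h]
  · have hd : 0 < 1 + β * r ^ 2 := by positivity
    have hz : 0 < salehAmp α β r := div_pos (mul_pos hα h) hd
    have key : α ^ 2 - 4 * β * (salehAmp α β r) ^ 2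
        = (α * (1 - β * r ^ 2) / (1 + β * r ^ 2)) ^ 2 := by
      unfold salehAmp; field_simp; ring
    unfold salehInv
    rw [if_neg hz.ne', key, Real.sqrt_sq (div_nonneg (mul_nonneg hα.le (by linarith)) hd.le)]
    unfold salehAmp
    field_simp
    ring

lemma salehInv_bounds {α β z : ℝ} (hα : 0 < α) (hβ : 0 < β) (hz0 : 0 ≤ z)
    (hz1 : z ≤ α / (2 * Real.sqrt β)) :
    0 ≤ salehInv α β z ∧ salehInv α β z ≤ 1 / Real.sqrt β ∧
      salehAmp α β (salehInv α β z) = z := by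
  have ht : 0 < Real.sqrt β := Real.sqrt_pos.2 hβ
  have ht2 : Real.sqrt β ^ 2 = β := Real.sq_sqrt hβ.le
  rcases eq_or_lt_of_le hz0 with h | h
  · simp [salehInv, salehAmp, ← h, ht.le]
  have hzt : z * (2 * Real.sqrt β) ≤ α := (le_div_iff₀ (by positivity)).1 hz1
  have h4 : 4 * β * z ^ 2 ≤ α ^ 2 := by
    nlinarith [mul_le_mul hzt hzt (by positivity) hα.le]
  set s := Real.sqrt (α ^ 2 - 4 * β * z ^ 2) with hs
  have hs0 : 0 ≤ s := Real.sqrt_nonneg _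
  have hs2 : s ^ 2 = α ^ 2 - 4 * β * z ^ 2 := Real.sq_sqrt (by linarith)
  have hsa : s < α := by
    have h1 : s ^ 2 < α ^ 2 := by nlinarith [mul_pos hβ (pow_pos h 2)]
    exact lt_of_pow_lt_pow_left₀ 2 hα.le h1
  have hinv : salehInv α β z = (α - s) / (2 * β * z) := by
    unfold salehInv; rw [if_neg h.ne']
  have hkey : α - 2 * Real.sqrt β * z ≤ s := by
    by_contra hc
    push_neg at hc
    nlinarith [mul_pos ht h]
  refine ⟨by rw [hinv]; exact div_nonneg (by linarith) (by positivity), ?_, ?_⟩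
  · rw [hinv, div_le_div_iff₀ (by positivity) ht]
    nlinarith [mul_le_mul_of_nonneg_left hkey ht.le]
  · rw [hinv]
    unfold salehAmp
    have h2bz : (2 * β * z) ≠ 0 := by positivity
    field_simp
    nlinarith [hs2, sq_nonneg s]

theorem optimal_amplitude_from_transformed (M : ℕ) (α β ls lt : Fin M → ℝ)
    (hα : ∀ i, 0 < α i) (hβ : ∀ i, 0 < β i)
    (hls : ∀ i, 0 ≤ ls i) (hlt : ∀ i, 0 ≤ lt i)
    (ε P : ℝ) (hε : 0 ≤ ε) (hP : 0 ≤ P)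
    (zstar : Fin M → ℝ) (hzmem : zstar ∈ feasC M α β lt ε P)
    (hzopt : ∀ z ∈ feasC M α β lt ε P, (∑ i, ls i * z i) ≤ ∑ i, ls i * zstar i) :
    (fun i => salehInv (α i) (β i) (zstar i)) ∈ feasD M α β lt ε P ∧
    ∀ r ∈ feasD M α β lt ε P,
      (∑ i, ls i * salehAmp (α i) (β i) (r i)) ≤
        ∑ i, ls i * salehAmp (α i) (β i) (salehInv (α i) (β i) (zstar i)) := by
  obtain ⟨hc1, hc2, hc3⟩ := hzmem
  -- properties of r* = ν(z*)
  have hb : ∀ i, 0 ≤ salehInv (α i) (β i) (zstar i) ∧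
      salehInv (α i) (β i) (zstar i) ≤ 1 / Real.sqrt (β i) ∧
      salehAmp (α i) (β i) (salehInv (α i) (β i) (zstar i)) = zstar i :=
    fun i => salehInv_bounds (hα i) (hβ i) (hc3 i).1 (hc3 i).2
  have hgsum : (∑ i, lt i * salehAmp (α i) (β i) (salehInv (α i) (β i) (zstar i)))
      = ∑ i, lt i * zstar i := by
    refine Finset.sum_congr rfl fun i _ => by rw [(hb i).2.2]
  have hsum_nonneg : 0 ≤ ∑ i, lt i * zstar i :=
    Finset.sum_nonneg fun i _ => mul_nonneg (hlt i) (hc3 i).1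
  constructor
  · refine ⟨?_, hc2, fun i => ⟨(hb i).1, (hb i).2.1⟩⟩
    rw [hgsum]
    have := pow_le_pow_left₀ hsum_nonneg hc1 2
    rwa [Real.sq_sqrt hε] at this
  · intro r hr
    obtain ⟨hd1, hd2, hd3⟩ := hr
    -- z i = g(r i) is feasible for C
    have hzfeas : (fun i => salehAmp (α i) (β i) (r i)) ∈ feasC M α β lt ε P := by
      refine ⟨?_, ?_, ?_⟩
      · have hnn : 0 ≤ ∑ i, lt i * salehAmp (α i) (β i) (r i) :=
          Finset.sum_nonneg fun i _ =>
            mul_nonneg (hlt i) (salehAmp_nonneg (hα i) (hβ i) (hd3 i).1)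
        exact (Real.le_sqrt hnn hε).2 hd1
      · have : (∑ i, (salehInv (α i) (β i) (salehAmp (α i) (β i) (r i))) ^ 2)
            = ∑ i, (r i) ^ 2 := by
          refine Finset.sum_congr rfl fun i _ => by
            rw [salehInv_amp (hα i) (hβ i) (hd3 i).1 (hd3 i).2]
        rw [this]; exact hd2
      · exact fun i => ⟨salehAmp_nonneg (hα i) (hβ i) (hd3 i).1,
          salehAmp_le (hα i) (hβ i) (hd3 i).1⟩
    have := hzopt _ hzfeas
    calc (∑ i, ls i * salehAmp (α i) (β i) (r i)) ≤ ∑ i, ls i * zstar i := this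
      _ = ∑ i, ls i * salehAmp (α i) (β i) (salehInv (α i) (β i) (zstar i)) := by
          refine Finset.sum_congr rfl fun i _ => by rw [(hb i).2.2]
end

section
/- Fix M ∈ ℕ, parameters α_i > 0 and β_i > 0 for i = 1,…,M, vectors l_s, l_t ∈ ℝ^M with nonnegative entries, and constants ε ≥ 0, P ≥ 0. Define C = { z̄ ∈ ℝ^M : Σ_i l_{t,i}·z̄_i ≤ √ε, Σ_i ν_{α_i,β_i}(z̄_i)² ≤ P, 0 ≤ z̄_i ≤ α_i/(2√β_i) } and D = { r ∈ ℝ^M : (Σ_i l_{t,i}·g_{α_i,β_i}(r_i))² ≤ ε, Σ_i r_i² ≤ P, 0 ≤ r_i ≤ 1/√β_i }. Then the supremum of Σ_i l_{s,i}·g_{α_i,β_i}(r_i) over r ∈ D equals the supremum of Σ_i l_{s,i}·z̄_i over z̄ ∈ C; indeed, the componentwise map r ↦ (g_{α_1,β_1}(r_1),…,g_{α_M,β_M}(r_M)) is a bijection from D onto C that identifies the two objectives. -/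
/-!
The discriminant identity `α² − 4β·g(r)² = (α(1 − βr²)/(1 + βr²))²` does all the work. It shows
that `g` maps `[0, 1/√β]` into `[0, α/(2√β)]`, and that `ν`, the smaller root
`2z/(α + √(α² − 4βz²))` of `βz·r² − α·r + z = 0`, inverts `g` there: the square root is
`α(1 − βr²)/(1 + βr²)` exactly when `βr² ≤ 1`. Coordinatewise, `g` and `ν` are therefore inverse
bijections between the boxes of (17) and (19); the power constraints correspond because
`ν ∘ g = id`, and the interference constraints because both sides are nonnegative. The objective
of (17) is that of (19) composed with `g`, so the suprema agree.
-/

theorem le_div_sqrt_iff {x a β : ℝ} (hx : 0 ≤ x) (ha : 0 ≤ a) (hβ : 0 < β) :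
    x ≤ a / √β ↔ β * x ^ 2 ≤ a ^ 2 := by
  have hβ' : 0 < √β := Real.sqrt_pos.mpr hβ
  rw [le_div_iff₀ hβ', ← pow_le_pow_iff_left₀ (by positivity) ha two_ne_zero, mul_pow,
    Real.sq_sqrt hβ.le, mul_comm]

section Scalar

variable {α β : ℝ}

theorem sq_sub_four_mul_salehAmp_sq (hβ : 0 ≤ β) (r : ℝ) :
    α ^ 2 - 4 * β * salehAmp α β r ^ 2 = (α * (1 - β * r ^ 2) / (1 + β * r ^ 2)) ^ 2 := by
  have : 0 < 1 + β * r ^ 2 := by positivity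
  unfold salehAmp
  field_simp
  ring

theorem salehInv_eq_div (hα : 0 < α) (hβ : 0 < β) {z : ℝ} (hz : 4 * β * z ^ 2 ≤ α ^ 2) :
    salehInv α β z = 2 * z / (α + √(α ^ 2 - 4 * β * z ^ 2)) := by
  have hs := Real.sq_sqrt (sub_nonneg.mpr hz)
  have hpos : 0 < α + √(α ^ 2 - 4 * β * z ^ 2) := by positivity
  rcases eq_or_ne z 0 with rfl | hz0
  · simp [salehInv]
  · rw [salehInv, if_neg hz0, div_eq_div_iff (by positivity) hpos.ne']
    linear_combination (-1 : ℝ) * hs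

theorem salehAmp_salehInv (hα : 0 < α) (hβ : 0 < β) {z : ℝ} (hz : 4 * β * z ^ 2 ≤ α ^ 2) :
    salehAmp α β (salehInv α β z) = z := by
  have hs := Real.sq_sqrt (sub_nonneg.mpr hz)
  have hpos : 0 < α + √(α ^ 2 - 4 * β * z ^ 2) := by positivity
  rw [salehInv_eq_div hα hβ hz, salehAmp]
  generalize √(α ^ 2 - 4 * β * z ^ 2) = s at hs hpos ⊢
  rw [div_eq_iff (by positivity)]
  field_simp
  linear_combination (-z) * hs

theorem salehInv_salehAmp (hα : 0 < α) (hβ : 0 < β) {r : ℝ} (hr : β * r ^ 2 ≤ 1) :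
    salehInv α β (salehAmp α β r) = r := by
  have hd : 0 < 1 + β * r ^ 2 := by positivity
  have hdisc := sq_sub_four_mul_salehAmp_sq hβ.le (α := α) r
  rw [salehInv_eq_div hα hβ (sub_nonneg.mp (hdisc ▸ sq_nonneg _)), hdisc,
    Real.sqrt_sq (div_nonneg (mul_nonneg hα.le (sub_nonneg.mpr hr)) hd.le), salehAmp]
  field_simp
  ring

theorem mapsTo_salehAmp (hα : 0 < α) (hβ : 0 < β) :
    Set.MapsTo (salehAmp α β) (Set.Icc 0 (1 / √β)) (Set.Icc 0 (α / (2 * √β))) := by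
  rintro r ⟨hr0, -⟩
  have hg : 0 ≤ salehAmp α β r := by unfold salehAmp; positivity
  refine ⟨hg, ?_⟩
  rw [show α / (2 * √β) = α / 2 / √β by ring, le_div_sqrt_iff hg (by positivity) hβ]
  have hdisc := sq_sub_four_mul_salehAmp_sq hβ.le (α := α) r
  nlinarith [sq_nonneg (α * (1 - β * r ^ 2) / (1 + β * r ^ 2))]

theorem four_mul_sq_le_of_mem_Icc (hα : 0 < α) (hβ : 0 < β) {z : ℝ}
    (hz : z ∈ Set.Icc 0 (α / (2 * √β))) : 4 * β * z ^ 2 ≤ α ^ 2 := by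
  have := (le_div_sqrt_iff hz.1 (by positivity) hβ).mp
    (show z ≤ α / 2 / √β by rw [div_div]; exact hz.2)
  nlinarith

theorem mul_sq_le_one_of_mem_Icc (hβ : 0 < β) {r : ℝ} (hr : r ∈ Set.Icc 0 (1 / √β)) :
    β * r ^ 2 ≤ 1 := by
  simpa using (le_div_sqrt_iff hr.1 zero_le_one hβ).mp hr.2

theorem mapsTo_salehInv (hα : 0 < α) (hβ : 0 < β) :
    Set.MapsTo (salehInv α β) (Set.Icc 0 (α / (2 * √β))) (Set.Icc 0 (1 / √β)) := by
  intro z hz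
  have hdisc := four_mul_sq_le_of_mem_Icc hα hβ hz
  have hν : 0 ≤ salehInv α β z := by
    rw [salehInv_eq_div hα hβ hdisc]
    exact div_nonneg (by linarith [hz.1]) (by positivity)
  refine ⟨hν, (le_div_sqrt_iff hν zero_le_one hβ).mpr ?_⟩
  rw [salehInv_eq_div hα hβ hdisc]
  have hs := Real.sqrt_nonneg (α ^ 2 - 4 * β * z ^ 2)
  rw [div_pow, mul_div_assoc', one_pow, div_le_one (by positivity)]
  nlinarith

end Scalar

section Coordinatewise

variable {M : ℕ} {α β lt : Fin M → ℝ} {ε P : ℝ}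

noncomputable def salehAmpPi (α β : Fin M → ℝ) (r : Fin M → ℝ) : Fin M → ℝ :=
  fun i => salehAmp (α i) (β i) (r i)

noncomputable def salehInvPi (α β : Fin M → ℝ) (z : Fin M → ℝ) : Fin M → ℝ :=
  fun i => salehInv (α i) (β i) (z i)

theorem leftInvOn_salehInvPi_feasD (hα : ∀ i, 0 < α i) (hβ : ∀ i, 0 < β i) :
    Set.LeftInvOn (salehInvPi α β) (salehAmpPi α β) (feasD M α β lt ε P) :=
  fun _ hr => funext fun i =>
    salehInv_salehAmp (hα i) (hβ i) (mul_sq_le_one_of_mem_Icc (hβ i) (hr.2.2 i))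

theorem rightInvOn_salehInvPi_feasC (hα : ∀ i, 0 < α i) (hβ : ∀ i, 0 < β i) :
    Set.RightInvOn (salehInvPi α β) (salehAmpPi α β) (feasC M α β lt ε P) :=
  fun _ hz => funext fun i =>
    salehAmp_salehInv (hα i) (hβ i) (four_mul_sq_le_of_mem_Icc (hα i) (hβ i) (hz.2.2 i))

theorem mapsTo_salehAmpPi_feasD (hα : ∀ i, 0 < α i) (hβ : ∀ i, 0 < β i)
    (hlt : ∀ i, 0 ≤ lt i) (hε : 0 ≤ ε) :
    Set.MapsTo (salehAmpPi α β) (feasD M α β lt ε P) (feasC M α β lt ε P) := by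
  intro r hr
  have hbox i := mapsTo_salehAmp (hα i) (hβ i) (hr.2.2 i)
  refine ⟨?_, ?_, hbox⟩
  · exact (Real.le_sqrt (Finset.sum_nonneg fun i _ => mul_nonneg (hlt i) (hbox i).1) hε).mpr hr.1
  · change ∑ i, salehInvPi α β (salehAmpPi α β r) i ^ 2 ≤ P
    rw [leftInvOn_salehInvPi_feasD hα hβ hr]
    exact hr.2.1

theorem mapsTo_salehInvPi_feasC (hα : ∀ i, 0 < α i) (hβ : ∀ i, 0 < β i)
    (hlt : ∀ i, 0 ≤ lt i) (hε : 0 ≤ ε) :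
    Set.MapsTo (salehInvPi α β) (feasC M α β lt ε P) (feasD M α β lt ε P) := by
  intro z hz
  refine ⟨?_, hz.2.1, fun i => mapsTo_salehInv (hα i) (hβ i) (hz.2.2 i)⟩
  change (∑ i, lt i * salehAmpPi α β (salehInvPi α β z) i) ^ 2 ≤ ε
  rw [rightInvOn_salehInvPi_feasC hα hβ hz]
  exact (Real.le_sqrt (Finset.sum_nonneg fun i _ => mul_nonneg (hlt i) (hz.2.2 i).1) hε).mp hz.1

theorem bijOn_salehAmpPi_feasD (hα : ∀ i, 0 < α i) (hβ : ∀ i, 0 < β i)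
    (hlt : ∀ i, 0 ≤ lt i) (hε : 0 ≤ ε) :
    Set.BijOn (salehAmpPi α β) (feasD M α β lt ε P) (feasC M α β lt ε P) :=
  Set.InvOn.bijOn ⟨leftInvOn_salehInvPi_feasD hα hβ, rightInvOn_salehInvPi_feasC hα hβ⟩
    (mapsTo_salehAmpPi_feasD hα hβ hlt hε) (mapsTo_salehInvPi_feasC hα hβ hlt hε)

end Coordinatewise

theorem transformed_problem_equivalence_general (M : ℕ) (α β ls lt : Fin M → ℝ)
    (hα : ∀ i, 0 < α i) (hβ : ∀ i, 0 < β i)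
    (hlt : ∀ i, 0 ≤ lt i)
    (ε P : ℝ) (hε : 0 ≤ ε) :
    sSup ((fun r : Fin M → ℝ => ∑ i, ls i * salehAmp (α i) (β i) (r i)) ''
        feasD M α β lt ε P) =
      sSup ((fun z : Fin M → ℝ => ∑ i, ls i * z i) '' feasC M α β lt ε P) ∧
    Set.BijOn (fun (r : Fin M → ℝ) (i : Fin M) => salehAmp (α i) (β i) (r i))
      (feasD M α β lt ε P) (feasC M α β lt ε P) ∧
    ∀ r ∈ feasD M α β lt ε P,
      (∑ i, ls i * salehAmp (α i) (β i) (r i)) =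
        ∑ i, ls i * (fun i => salehAmp (α i) (β i) (r i)) i := by
  have hbij := bijOn_salehAmpPi_feasD (P := P) hα hβ hlt hε
  refine ⟨?_, hbij, fun _ _ => rfl⟩
  change sSup (((fun z : Fin M → ℝ => ∑ i, ls i * z i) ∘ salehAmpPi α β) '' _) = _
  rw [Set.image_comp, hbij.image_eq]

/-- the suprema of the two problems agree: the componentwise Saleh
map is a bijection of `D` onto `C` identifying the objectives. -/
theorem transformed_problem_equivalence (M : ℕ) (α β ls lt : Fin M → ℝ)
    (hα : ∀ i, 0 < α i) (hβ : ∀ i, 0 < β i)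
    (hls : ∀ i, 0 ≤ ls i) (hlt : ∀ i, 0 ≤ lt i)
    (ε P : ℝ) (hε : 0 ≤ ε) (hP : 0 ≤ P) :
    sSup ((fun r : Fin M → ℝ => ∑ i, ls i * salehAmp (α i) (β i) (r i)) ''
        feasD M α β lt ε P) =
      sSup ((fun z : Fin M → ℝ => ∑ i, ls i * z i) '' feasC M α β lt ε P) ∧
    Set.BijOn (fun (r : Fin M → ℝ) (i : Fin M) => salehAmp (α i) (β i) (r i))
      (feasD M α β lt ε P) (feasC M α β lt ε P) ∧
    ∀ r ∈ feasD M α β lt ε P,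
      (∑ i, ls i * salehAmp (α i) (β i) (r i)) =
        ∑ i, ls i * (fun i => salehAmp (α i) (β i) (r i)) i :=
  transformed_problem_equivalence_general M α β ls lt hα hβ hlt ε P hε
end

section
/- Fix M ∈ ℕ, a carrier phase θ₀ ∈ ℝ, Saleh parameters α_i > 0, β_i > 0, α_{φ,i} ∈ ℝ, β_{φ,i} ≥ 0 for i = 1,…,M, vectors l_s, l_t ∈ ℝ^M with nonnegative entries, and constants ε ≥ 0, P ≥ 0. For r ∈ ℝ^M with r_i ≥ 0 and θ ∈ ℝ^M, define z_i(r_i, θ_i) = (α_i·r_i/(1 + β_i·r_i²))·exp(𝕚·(θ₀ + θ_i + α_{φ,i}·r_i²/(1 + β_{φ,i}·r_i²))) ∈ ℂ, and let S = { (r, θ) ∈ ℝ^M × ℝ^M : r_i ≥ 0 for all i, Σ_i r_i² ≤ P, and (Σ_i l_{t,i}·α_i·r_i/(1 + β_i·r_i²))² ≤ ε }. Then the supremum over S of the objective F(r,θ) = |Σ_{i=1}^M l_{s,i}·z_i(r_i, θ_i)| is attained at some point (r*, θ*) ∈ S satisfying both θ*_i = −θ₀ − α_{φ,i}·(r*_i)²/(1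 + β_{φ,i}·(r*_i)²) for all i, and r*_i ≤ 1/√(β_i) for all i. -/
/-!
The modulus of `∑ lₛᵢ zᵢ` is at most the real sum `g(r) = ∑ lₛᵢ Aᵢ(rᵢ)` of the Saleh amplitudes
`Aᵢ(r) = αᵢ r / (1 + βᵢ r²)`, with equality when every phase is chosen so that `zᵢ` is real and
nonnegative. The constraints involve `r` only, and they cut out a compact set containing `0`, so
`g` has a maximiser `r₀` there. Finally `A(r) = A((β r)⁻¹)`, and past the saturation point
`1/√β` the reflected amplitude `(β r)⁻¹` is smaller than `r`; replacing each `r₀ᵢ` by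
`min r₀ᵢ (βᵢ r₀ᵢ)⁻¹` therefore keeps every amplitude, keeps feasibility and lands below saturation.
-/

/-- The Saleh PA output for input signal `r·exp(𝕚(θ₀+θ))`:
`z(r,θ) = (α·r/(1+β·r²))·exp(𝕚(θ₀ + θ + α_φ·r²/(1+β_φ·r²)))`. -/
noncomputable def salehOut (α β αφ βφ θ₀ r θ : ℝ) : ℂ :=
  ((α * r / (1 + β * r ^ 2) : ℝ) : ℂ) *
    Complex.exp (Complex.I * ((θ₀ + θ + αφ * r ^ 2 / (1 + βφ * r ^ 2) : ℝ) : ℂ))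

open Finset

noncomputable def salehAmplitude (α β r : ℝ) : ℝ :=
  α * r / (1 + β * r ^ 2)

section SalehAmplitude

variable {α β : ℝ}

lemma one_add_mul_sq_pos (hβ : 0 ≤ β) (r : ℝ) : 0 < 1 + β * r ^ 2 := by
  positivity

lemma salehAmplitude_nonneg (hα : 0 ≤ α) (hβ : 0 ≤ β) {r : ℝ} (hr : 0 ≤ r) :
    0 ≤ salehAmplitude α β r :=
  div_nonneg (mul_nonneg hα hr) (one_add_mul_sq_pos hβ r).le

lemma continuous_salehAmplitude (hβ : 0 ≤ β) : Continuous (salehAmplitude α β) :=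
  (continuous_const.mul continuous_id).div (by fun_prop) fun r => (one_add_mul_sq_pos hβ r).ne'

lemma salehAmplitude_inv_mul (hβ : β ≠ 0) (r : ℝ) :
    salehAmplitude α β (β * r)⁻¹ = salehAmplitude α β r := by
  rcases eq_or_ne r 0 with rfl | hr
  · simp
  unfold salehAmplitude
  field_simp
  ring

lemma salehAmplitude_min_inv_mul (hβ : β ≠ 0) (r : ℝ) :
    salehAmplitude α β (min r (β * r)⁻¹) = salehAmplitude α β r := by
  rcases min_cases r (β * r)⁻¹ with ⟨h, -⟩ | ⟨h, -⟩ <;> rw [h]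
  exact salehAmplitude_inv_mul hβ r

/-- `min r (β r)⁻¹` is at most the geometric mean `√(r · (β r)⁻¹) = 1/√β`. -/
lemma min_inv_mul_le_inv_sqrt (hβ : 0 < β) {r : ℝ} (hr : 0 ≤ r) :
    min r (β * r)⁻¹ ≤ 1 / √β := by
  have hmin : 0 ≤ min r (β * r)⁻¹ := le_min hr (by positivity)
  rw [one_div, ← Real.sqrt_inv, Real.le_sqrt hmin (by positivity)]
  calc min r (β * r)⁻¹ ^ 2 ≤ r * (β * r)⁻¹ := by
        rw [sq]; exact mul_le_mul (min_le_left _ _) (min_le_right _ _) hmin hr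
    _ ≤ β⁻¹ := by
        rcases hr.eq_or_lt with rfl | hr
        · simp [hβ.le]
        · rw [mul_inv, mul_left_comm, mul_inv_cancel₀ hr.ne', mul_one]

end SalehAmplitude

section SalehOut

variable {α β αφ βφ θ₀ r : ℝ}

lemma norm_salehOut (hα : 0 ≤ α) (hβ : 0 ≤ β) (hr : 0 ≤ r) (θ : ℝ) :
    ‖salehOut α β αφ βφ θ₀ r θ‖ = salehAmplitude α β r := by
  rw [salehOut, norm_mul, Complex.norm_real, mul_comm Complex.I,
    Complex.norm_exp_ofReal_mul_I, mul_one]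
  exact Real.norm_of_nonneg (salehAmplitude_nonneg hα hβ hr)

lemma salehOut_aligned :
    salehOut α β αφ βφ θ₀ r (-θ₀ - αφ * r ^ 2 / (1 + βφ * r ^ 2)) = salehAmplitude α β r := by
  rw [salehOut, show θ₀ + (-θ₀ - αφ * r ^ 2 / (1 + βφ * r ^ 2)) + αφ * r ^ 2 / (1 + βφ * r ^ 2)
    = 0 by ring]
  simp [salehAmplitude]

end SalehOut

section Beamforming

variable {ι : Type*} [Fintype ι] {α β : ι → ℝ}

lemma norm_sum_mul_salehOut_le (hα : ∀ i, 0 ≤ α i) (hβ : ∀ i, 0 ≤ β i) {ls : ι → ℝ}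
    (hls : ∀ i, 0 ≤ ls i) (αφ βφ : ι → ℝ) (θ₀ : ℝ) {r : ι → ℝ} (hr : ∀ i, 0 ≤ r i)
    (θ : ι → ℝ) :
    ‖∑ i, (ls i : ℂ) * salehOut (α i) (β i) (αφ i) (βφ i) θ₀ (r i) (θ i)‖ ≤
      ∑ i, ls i * salehAmplitude (α i) (β i) (r i) :=
  (norm_sum_le _ _).trans_eq <| sum_congr rfl fun i _ => by
    rw [norm_mul, Complex.norm_real, Real.norm_of_nonneg (hls i),
      norm_salehOut (hα i) (hβ i) (hr i)]

lemma norm_sum_mul_salehOut_aligned (hα : ∀ i, 0 ≤ α i) (hβ : ∀ i, 0 ≤ β i) {ls : ι → ℝ}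
    (hls : ∀ i, 0 ≤ ls i) (αφ βφ : ι → ℝ) (θ₀ : ℝ) {r : ι → ℝ} (hr : ∀ i, 0 ≤ r i) :
    ‖∑ i, (ls i : ℂ) * salehOut (α i) (β i) (αφ i) (βφ i) θ₀ (r i)
        (-θ₀ - αφ i * r i ^ 2 / (1 + βφ i * r i ^ 2))‖ =
      ∑ i, ls i * salehAmplitude (α i) (β i) (r i) := by
  simp only [salehOut_aligned, ← Complex.ofReal_mul, ← Complex.ofReal_sum, Complex.norm_real]
  exact Real.norm_of_nonneg <| sum_nonneg fun i _ =>
    mul_nonneg (hls i) (salehAmplitude_nonneg (hα i) (hβ i) (hr i))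

lemma continuous_sum_mul_salehAmplitude (hβ : ∀ i, 0 ≤ β i) (c : ι → ℝ) :
    Continuous fun r : ι → ℝ => ∑ i, c i * salehAmplitude (α i) (β i) (r i) :=
  continuous_finsetSum _ fun i _ =>
    continuous_const.mul ((continuous_salehAmplitude (hβ i)).comp (continuous_apply i))

lemma isCompact_setOf_sum_sq_le (P : ℝ) : IsCompact {r : ι → ℝ | ∑ i, r i ^ 2 ≤ P} := by
  refine (isCompact_univ_pi fun _ => isCompact_Icc (a := -√P) (b := √P)).of_isClosed_subset
    (isClosed_le (by fun_prop) continuous_const) fun r hr i _ => abs_le.mp ?_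
  exact Real.abs_le_sqrt <| (single_le_sum (fun j _ => sq_nonneg (r j)) (mem_univ i)).trans hr

variable (α β) (lt : ι → ℝ) (ε P : ℝ)

/-- `S` constrains only the amplitudes: `(r, θ) ∈ S ↔ IsFeasible α β lt ε P r`. -/
def IsFeasible (r : ι → ℝ) : Prop :=
  (∀ i, 0 ≤ r i) ∧ ∑ i, r i ^ 2 ≤ P ∧ (∑ i, lt i * salehAmplitude (α i) (β i) (r i)) ^ 2 ≤ ε

variable {α β lt ε P}

lemma isFeasible_zero (hε : 0 ≤ ε) (hP : 0 ≤ P) : IsFeasible α β lt ε P 0 :=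
  ⟨fun _ => le_rfl, by simpa using hP, by simpa [salehAmplitude] using hε⟩

lemma isCompact_setOf_isFeasible (hβ : ∀ i, 0 ≤ β i) :
    IsCompact {r | IsFeasible α β lt ε P r} := by
  have hclosed : IsClosed ({r : ι → ℝ | 0 ≤ r} ∩
      {r | (∑ i, lt i * salehAmplitude (α i) (β i) (r i)) ^ 2 ≤ ε}) :=
    (isClosed_le continuous_const continuous_id).inter
      (isClosed_le ((continuous_sum_mul_salehAmplitude hβ lt).pow 2) continuous_const)
  convert (isCompact_setOf_sum_sq_le P).inter_right hclosed using 1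
  ext r
  simp only [IsFeasible, Set.mem_ofPred_eq, Set.mem_inter_iff, Pi.le_def, Pi.zero_apply]
  tauto

lemma IsFeasible.min_inv_mul (hβ : ∀ i, 0 < β i) {r : ι → ℝ} (hr : IsFeasible α β lt ε P r) :
    IsFeasible α β lt ε P fun i => min (r i) (β i * r i)⁻¹ := by
  obtain ⟨hr₀, hrP, hrε⟩ := hr
  have hmin i : 0 ≤ min (r i) (β i * r i)⁻¹ :=
    le_min (hr₀ i) (inv_nonneg.mpr (mul_nonneg (hβ i).le (hr₀ i)))
  refine ⟨hmin, ?_, ?_⟩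
  · exact (sum_le_sum fun i _ => pow_le_pow_left₀ (hmin i) (min_le_left _ _) 2).trans hrP
  · simpa only [salehAmplitude_min_inv_mul (hβ _).ne'] using hrε

end Beamforming

theorem beamforming_optimum_aligned_below_saturation_general (M : ℕ) (θ₀ : ℝ)
    (α β αφ βφ ls lt : Fin M → ℝ)
    (hα : ∀ i, 0 < α i) (hβ : ∀ i, 0 < β i)
    (hls : ∀ i, 0 ≤ ls i)
    (ε P : ℝ) (hε : 0 ≤ ε) (hP : 0 ≤ P) :
    ∃ r θ : Fin M → ℝ,
      ((∀ i, 0 ≤ r i) ∧ (∑ i, (r i) ^ 2) ≤ P ∧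
        (∑ i, lt i * (α i * r i / (1 + β i * (r i) ^ 2))) ^ 2 ≤ ε) ∧
      (∀ r' θ' : Fin M → ℝ,
        ((∀ i, 0 ≤ r' i) ∧ (∑ i, (r' i) ^ 2) ≤ P ∧
          (∑ i, lt i * (α i * r' i / (1 + β i * (r' i) ^ 2))) ^ 2 ≤ ε) →
        ‖(∑ i, (↑(ls i) : ℂ) *
            salehOut (α i) (β i) (αφ i) (βφ i) θ₀ (r' i) (θ' i))‖ ≤
          ‖(∑ i, (↑(ls i) : ℂ) *
            salehOut (α i) (β i) (αφ i) (βφ i) θ₀ (r i) (θ i))‖) ∧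
      (∀ i, θ i = -θ₀ - αφ i * (r i) ^ 2 / (1 + βφ i * (r i) ^ 2)) ∧
      (∀ i, r i ≤ 1 / Real.sqrt (β i)) := by
  have hα₀ i : 0 ≤ α i := (hα i).le
  have hβ₀ i : 0 ≤ β i := (hβ i).le
  set gain : (Fin M → ℝ) → ℝ := fun r => ∑ i, ls i * salehAmplitude (α i) (β i) (r i)
  have hgain : Continuous gain := continuous_sum_mul_salehAmplitude hβ₀ ls
  obtain ⟨r₀, hr₀, hmax⟩ := (isCompact_setOf_isFeasible (lt := lt) (ε := ε) (P := P) hβ₀)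
    |>.exists_isMaxOn ⟨0, isFeasible_zero hε hP⟩ hgain.continuousOn
  set r : Fin M → ℝ := fun i => min (r₀ i) (β i * r₀ i)⁻¹
  have hr : IsFeasible α β lt ε P r := hr₀.min_inv_mul hβ
  refine ⟨r, fun i => -θ₀ - αφ i * r i ^ 2 / (1 + βφ i * r i ^ 2), hr, fun r' θ' hr' => ?_,
    fun i => rfl, fun i => min_inv_mul_le_inv_sqrt (hβ i) (hr₀.1 i)⟩
  calc _ ≤ gain r' := norm_sum_mul_salehOut_le hα₀ hβ₀ hls αφ βφ θ₀ hr'.1 θ'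
    _ ≤ gain r₀ := hmax (show IsFeasible α β lt ε P r' from hr')
    _ = gain r := by simp only [gain, r, salehAmplitude_min_inv_mul (hβ _).ne']
    _ = _ := (norm_sum_mul_salehOut_aligned hα₀ hβ₀ hls αφ βφ θ₀ hr.1).symm

/-- Proposition 1: the beamforming objective
`F(r,θ) = |Σ l_s,i·z_i(r_i,θ_i)|` attains its supremum over the feasible set
`S = {(r,θ) : r ≥ 0, Σ r_i² ≤ P, (Σ l_t,i·α_i·r_i/(1+β_i·r_i²))² ≤ ε}` at some
point whose phases are aligned (13) and whose amplitudes do not exceed the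
saturation points `1/√β_i` (14). -/
theorem beamforming_optimum_aligned_below_saturation (M : ℕ) (θ₀ : ℝ)
    (α β αφ βφ ls lt : Fin M → ℝ)
    (hα : ∀ i, 0 < α i) (hβ : ∀ i, 0 < β i) (hβφ : ∀ i, 0 ≤ βφ i)
    (hls : ∀ i, 0 ≤ ls i) (hlt : ∀ i, 0 ≤ lt i)
    (ε P : ℝ) (hε : 0 ≤ ε) (hP : 0 ≤ P) :
    ∃ r θ : Fin M → ℝ,
      ((∀ i, 0 ≤ r i) ∧ (∑ i, (r i) ^ 2) ≤ P ∧
        (∑ i, lt i * (α i * r i / (1 + β i * (r i) ^ 2))) ^ 2 ≤ ε) ∧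
      (∀ r' θ' : Fin M → ℝ,
        ((∀ i, 0 ≤ r' i) ∧ (∑ i, (r' i) ^ 2) ≤ P ∧
          (∑ i, lt i * (α i * r' i / (1 + β i * (r' i) ^ 2))) ^ 2 ≤ ε) →
        ‖(∑ i, (↑(ls i) : ℂ) *
            salehOut (α i) (β i) (αφ i) (βφ i) θ₀ (r' i) (θ' i))‖ ≤
          ‖(∑ i, (↑(ls i) : ℂ) *
            salehOut (α i) (β i) (αφ i) (βφ i) θ₀ (r i) (θ i))‖) ∧
      (∀ i, θ i = -θ₀ - αφ i * (r i) ^ 2 / (1 + βφ i * (r i) ^ 2)) ∧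
      (∀ i, r i ≤ 1 / Real.sqrt (β i)) :=
  beamforming_optimum_aligned_below_saturation_general M θ₀ α β αφ βφ ls lt hα hβ hls ε P hε hP
end
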